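/- Let P ⊆ S^{N−1} be a finite root system in ℝ^N (N ≥ 1) satisfying condition (EA). Then for every x ∈ ℝ^N with |x| ≥ σ1(P)⁻¹σ2(P) there exists a basis A ⊆ P of ℝ^N such that p·x ≥ 1 for all p ∈ A. -/

import Mathlib

/-!
Let `A = {p ∈ P : |p·x| ≥ 1}`. If some root `p₁` has `|p₁·x| ≥ σ₁⁻¹`, take a basis `{wᵢ} ⊆ P`
with `|wᵢ·p₁| ≥ σ₁`. Each `wᵢ` lies in `span A`: either `|wᵢ·x| ≥ 1`, or the reflection
`wᵢ - 2(wᵢ·p₁)p₁ ∈ P` has `|·x| > 2 - 1`, and `p₁ ∈ A`. Otherwise `|p·x| < σ₁⁻¹` on all of `P`,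
and rescaling `x` into the polytope defining `σ₂` gives `|x| < σ₁⁻¹σ₂`. Hence `A` spans `ℝ^N`,
and since `P = -P` so does `{p ∈ P : p·x ≥ 1}`, which therefore contains a basis.
-/

open scoped RealInnerProductSpace
open Metric Set MeasureTheory

noncomputable section

abbrev E (N : ℕ) := EuclideanSpace ℝ (Fin N)

variable {N : ℕ}

/-- Reflection across the hyperplane `Π_p(s) = {x | x·p = s}`. -/
def reflect (p : E N) (s : ℝ) (x : E N) : E N := x - (2 * (⟪x, p⟫ - s)) • p

/-- Reflection across the hyperplane through the origin orthogonal to `p`. -/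
def reflect0 (p : E N) : E N → E N := reflect p 0

/-- A finite root system of unit vectors. -/
def IsRootSystem (P : Set (E N)) : Prop :=
  P.Finite ∧ (∀ p ∈ P, ‖p‖ = 1) ∧
  (∀ p ∈ P, {q | q ∈ P ∧ ∃ c : ℝ, q = c • p} = {p, -p}) ∧
  (∀ p ∈ P, reflect0 p '' P = P)

/-- Condition (EA): for every hyperplane through the origin (with normal `v ≠ 0`),
the part of `P` outside the hyperplane spans `ℝ^N`. -/
def CondEA (P : Set (E N)) : Prop :=
  ∀ v : E N, v ≠ 0 → Submodule.span ℝ {p | p ∈ P ∧ ⟪p, v⟫ ≠ 0} = ⊤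

/-- The reflection property (RP) with respect to `P` and `ρ`. -/
def ReflProp (P : Set (E N)) (ρ : ℝ) (Ω : Set (E N)) : Prop :=
  ∀ p ∈ P, ∀ s > ρ,
    reflect p s '' Ω ∩ {x | ⟪x, p⟫ < s} ⊆ Ω ∩ {x | ⟪x, p⟫ < s}

/-- `v` enumerates a basis of `ℝ^N` consisting of elements of `P`. -/
def BasisIn (P : Set (E N)) (v : Fin N → E N) : Prop :=
  (∀ i, v i ∈ P) ∧ LinearIndependent ℝ v ∧ Submodule.span ℝ (Set.range v) = ⊤

/-- The open cone `Co_r(A)` generated by a basis. -/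
def Cone (r : ℝ) (v : Fin N → E N) : Set (E N) :=
  {x | ∃ a : Fin N → ℝ, (∀ i, 0 < a i) ∧ (∑ i, a i) < r ∧ x = ∑ i, a i • v i}

/-- `σ₁(P)`. -/
def sigma1 (P : Set (E N)) : ℝ :=
  sInf {s | ∃ p₁ ∈ P, s = sSup {t | ∃ v : Fin N → E N, BasisIn P v ∧
    t = sInf (Set.range fun i => |⟪v i, p₁⟫|)}}

/-- `σ₂(P)`. -/
def sigma2 (P : Set (E N)) : ℝ :=
  sSup {t | ∃ x : E N, (∀ p ∈ P, |⟪p, x⟫| ≤ 1) ∧ t = ‖x‖}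

/-- `σ₃(P)`. -/
def sigma3 (P : Set (E N)) : ℝ :=
  sInf {s | ∃ v : Fin N → E N, BasisIn P v ∧
    s = sSup {r | 0 < r ∧ ball ((1 / (2 * (N : ℝ))) • ∑ i, v i) r ⊆ Cone 1 v}}

namespace IsRootSystem

variable {P : Set (E N)}

lemma neg_mem (hP : IsRootSystem P) {p : E N} (hp : p ∈ P) : -p ∈ P := by
  have h : -p ∈ ({p, -p} : Set (E N)) := by simp
  rw [← hP.2.2.1 p hp] at h
  exact h.1

lemma sub_smul_mem (hP : IsRootSystem P) {p q : E N} (hp : p ∈ P) (hq : q ∈ P) :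
    q - (2 * ⟪q, p⟫) • p ∈ P := by
  have h : reflect0 p q ∈ reflect0 p '' P := mem_image_of_mem _ hq
  rw [hP.2.2.2 p hp] at h
  simpa [reflect0, reflect] using h

lemma abs_inner_le_one (hP : IsRootSystem P) {p q : E N} (hp : p ∈ P) (hq : q ∈ P) :
    |⟪p, q⟫| ≤ 1 := by
  simpa [hP.2.1 p hp, hP.2.1 q hq] using abs_real_inner_le_norm p q

lemma span_setOf_le_abs_inner_le (hP : IsRootSystem P) (c : ℝ) (x : E N) :
    Submodule.span ℝ {p ∈ P | c ≤ |⟪p, x⟫|} ≤ Submodule.span ℝ {p ∈ P | c ≤ ⟪p, x⟫} := by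
  rw [Submodule.span_le]
  rintro p ⟨hp, hpx⟩
  rcases le_abs'.mp hpx with hneg | hpos
  · rw [← neg_neg p]
    refine Submodule.neg_mem _ (Submodule.subset_span ⟨hP.neg_mem hp, ?_⟩)
    rw [inner_neg_left]
    linarith
  · exact Submodule.subset_span ⟨hp, hpos⟩

/-- The inner products of `q` and of its mirror image `q - 2⟪q, p⟫ p` with `x` differ by
`2⟪q, p⟫⟪p, x⟫`, so they cannot both be less than `1` in absolute value. -/
lemma mem_span_of_one_le_abs_inner_mul (hP : IsRootSystem P) {p q x : E N} (hp : p ∈ P)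
    (hq : q ∈ P) (h : 1 ≤ |⟪q, p⟫ * ⟪p, x⟫|) :
    q ∈ Submodule.span ℝ {r ∈ P | 1 ≤ |⟪r, x⟫|} := by
  by_cases hqx : 1 ≤ |⟪q, x⟫|
  · exact Submodule.subset_span ⟨hq, hqx⟩
  have hqp := hP.abs_inner_le_one hq hp
  rw [abs_mul] at h
  have hpx : 1 ≤ |⟪p, x⟫| := by nlinarith [abs_nonneg ⟪q, p⟫, abs_nonneg ⟪p, x⟫]
  set r := q - (2 * ⟪q, p⟫) • p
  have hrx : 1 ≤ |⟪r, x⟫| := by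
    have hinner : ⟪r, x⟫ = ⟪q, x⟫ - 2 * ⟪q, p⟫ * ⟪p, x⟫ := by
      rw [inner_sub_left, real_inner_smul_left]
    have := abs_sub_abs_le_abs_sub (2 * ⟪q, p⟫ * ⟪p, x⟫) ⟪q, x⟫
    rw [abs_sub_comm, ← hinner, mul_assoc, abs_mul, abs_mul, abs_two] at this
    linarith
  have hqr : q = r + (2 * ⟪q, p⟫) • p := (sub_add_cancel _ _).symm
  rw [hqr]
  exact Submodule.add_mem _ (Submodule.subset_span ⟨hP.sub_smul_mem hp hq, hrx⟩)
    (Submodule.smul_mem _ _ (Submodule.subset_span ⟨hp, hpx⟩))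

end IsRootSystem

lemma CondEA.span_eq_top {P : Set (E N)} (hEA : CondEA P) : Submodule.span ℝ P = ⊤ := by
  refine eq_top_iff.mpr fun z _ => ?_
  rcases eq_or_ne z 0 with rfl | hz
  · exact Submodule.zero_mem _
  · exact Submodule.span_mono (fun p hp => hp.1) (hEA z hz ▸ Submodule.mem_top)

namespace BasisIn

variable {P Q : Set (E N)} {v : Fin N → E N}

lemma mono (hPQ : P ⊆ Q) (hv : BasisIn P v) : BasisIn Q v :=
  ⟨fun i => hPQ (hv.1 i), hv.2⟩

def toBasis (hv : BasisIn P v) : Module.Basis (Fin N) ℝ (E N) :=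
  .mk hv.2.1 hv.2.2.ge

lemma toBasis_apply (hv : BasisIn P v) (i : Fin N) : hv.toBasis i = v i :=
  Module.Basis.mk_apply _ _ _

end BasisIn

lemma exists_basisIn_of_span_eq_top {s : Set (E N)} (hs : Submodule.span ℝ s = ⊤) :
    ∃ v, BasisIn s v := by
  obtain ⟨b, hbs, hbspan, hbli⟩ := exists_linearIndependent ℝ s
  let B : Module.Basis b ℝ (E N) := .mk hbli (by rw [Subtype.range_coe, hbspan, hs])
  have := Module.Finite.finite_basis B
  let B' := B.reindex (Finite.equivFinOfCardEq
    (by rw [← Module.finrank_eq_nat_card_basis B, finrank_euclideanSpace_fin]))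
  refine ⟨B', fun i => ?_, B'.linearIndependent, B'.span_eq⟩
  simpa [B', B] using hbs (Subtype.mem _)

lemma Set.Finite.setOf_basisIn {P : Set (E N)} (hP : P.Finite) : {v | BasisIn P v}.Finite :=
  (Set.Finite.pi fun _ => hP).subset fun _ hv i _ => hv.1 i

section Sigma1

variable {P : Set (E N)}

def sigma1At (P : Set (E N)) (p₁ : E N) : ℝ :=
  sSup {t | ∃ v : Fin N → E N, BasisIn P v ∧ t = sInf (Set.range fun i => |⟪v i, p₁⟫|)}

lemma sigma1At_nonneg (p₁ : E N) : 0 ≤ sigma1At P p₁ :=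
  Real.sSup_nonneg <| by
    rintro _ ⟨v, -, rfl⟩
    exact Real.sInf_nonneg (by rintro _ ⟨i, rfl⟩; exact abs_nonneg _)

lemma sigma1_le_sigma1At {p₁ : E N} (hp₁ : p₁ ∈ P) : sigma1 P ≤ sigma1At P p₁ :=
  csInf_le ⟨0, by rintro _ ⟨p, -, rfl⟩; exact sigma1At_nonneg p⟩ ⟨p₁, hp₁, rfl⟩

lemma isGreatest_sigma1At (hP : P.Finite) {v₀ : Fin N → E N} (hv₀ : BasisIn P v₀) (p₁ : E N) :
    IsGreatest {t | ∃ v : Fin N → E N, BasisIn P v ∧ t = sInf (Set.range fun i => |⟪v i, p₁⟫|)}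
      (sigma1At P p₁) := by
  have hfin : {t | ∃ v : Fin N → E N, BasisIn P v ∧
      t = sInf (Set.range fun i => |⟪v i, p₁⟫|)}.Finite :=
    (hP.setOf_basisIn.image fun v => sInf (Set.range fun i => |⟪v i, p₁⟫|)).subset
      (by rintro _ ⟨v, hv, rfl⟩; exact ⟨v, hv, rfl⟩)
  exact ⟨Set.Nonempty.csSup_mem ⟨_, v₀, hv₀, rfl⟩ hfin, fun _ ht => le_csSup hfin.bddAbove ht⟩

lemma exists_basisIn_sigma1_le (hP : IsRootSystem P) (hEA : CondEA P) {p₁ : E N}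
    (hp₁ : p₁ ∈ P) : ∃ v, BasisIn P v ∧ ∀ i, sigma1 P ≤ |⟪v i, p₁⟫| := by
  obtain ⟨v₀, hv₀⟩ := exists_basisIn_of_span_eq_top hEA.span_eq_top
  obtain ⟨v, hv, hvt⟩ := (isGreatest_sigma1At hP.1 hv₀ p₁).1
  refine ⟨v, hv, fun i => (sigma1_le_sigma1At hp₁).trans ?_⟩
  rw [hvt]
  exact csInf_le (Set.finite_range _).bddBelow ⟨i, rfl⟩

lemma sigma1_pos (hP : IsRootSystem P) (hEA : CondEA P) (hne : P.Nonempty) : 0 < sigma1 P := by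
  obtain ⟨p₀, hp₀⟩ := hne
  have hfin : {s | ∃ p₁ ∈ P, s = sigma1At P p₁}.Finite :=
    (hP.1.image (sigma1At P)).subset (by rintro _ ⟨p, hp, rfl⟩; exact ⟨p, hp, rfl⟩)
  obtain ⟨p, hp, hσ⟩ : sigma1 P ∈ {s | ∃ p₁ ∈ P, s = sigma1At P p₁} :=
    Set.Nonempty.csInf_mem ⟨_, p₀, hp₀, rfl⟩ hfin
  have hp0 : p ≠ 0 := fun h => by simpa [h] using hP.2.1 p hp
  obtain ⟨v, hv⟩ := exists_basisIn_of_span_eq_top (hEA p hp0)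
  have hvP : BasisIn P v := hv.mono fun q hq => hq.1
  have := nontrivial_of_ne p 0 hp0
  have := hv.toBasis.index_nonempty
  obtain ⟨i, hi⟩ := exists_eq_ciInf_of_finite (f := fun i => |⟪v i, p⟫|)
  rw [hσ]
  calc 0 < ⨅ i, |⟪v i, p⟫| := hi ▸ abs_pos.mpr (hv.1 i).2
    _ ≤ sigma1At P p := (isGreatest_sigma1At hP.1 hvP p).2 ⟨v, hvP, rfl⟩

end Sigma1

section Sigma2

variable {P : Set (E N)}

lemma bddAbove_sigma2_set (hspan : Submodule.span ℝ P = ⊤) :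
    BddAbove {t | ∃ x : E N, (∀ p ∈ P, |⟪p, x⟫| ≤ 1) ∧ t = ‖x‖} := by
  obtain ⟨v, hv⟩ := exists_basisIn_of_span_eq_top hspan
  let φ : E N →ₗ[ℝ] Fin N → ℝ := LinearMap.pi fun i => innerₗ (E N) (v i)
  have hker : LinearMap.ker φ = ⊥ := LinearMap.ker_eq_bot'.mpr fun z hz =>
    InnerProductSpace.ext_inner_left_basis hv.toBasis fun i => by
      simpa [φ, BasisIn.toBasis_apply] using congrFun hz i
  obtain ⟨K, -, hK⟩ := φ.exists_antilipschitzWith hker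
  refine ⟨K, ?_⟩
  rintro _ ⟨x, hx, rfl⟩
  have hφx : ‖φ x‖ ≤ 1 :=
    (pi_norm_le_iff_of_nonneg zero_le_one).mpr fun i => by simpa [φ] using hx _ (hv.1 i)
  calc ‖x‖ ≤ K * ‖φ x‖ := ZeroHomClass.bound_of_antilipschitz φ hK x
    _ ≤ K := mul_le_of_le_one_right K.2 hφx

lemma norm_le_mul_sigma2 (hspan : Submodule.span ℝ P = ⊤) {c : ℝ} (hc : 0 < c) {z : E N}
    (hz : ∀ p ∈ P, |⟪p, z⟫| ≤ c) : ‖z‖ ≤ c * sigma2 P := by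
  have h : ‖c⁻¹ • z‖ ≤ sigma2 P := by
    refine le_csSup (bddAbove_sigma2_set hspan) ⟨c⁻¹ • z, fun p hp => ?_, rfl⟩
    rw [real_inner_smul_right, abs_mul, abs_of_pos (inv_pos.mpr hc), inv_mul_le_iff₀ hc, mul_one]
    exact hz p hp
  rwa [norm_smul, Real.norm_of_nonneg (inv_pos.mpr hc).le, inv_mul_le_iff₀ hc] at h

lemma one_le_sigma2 (hP : IsRootSystem P) (hspan : Submodule.span ℝ P = ⊤) {p : E N}
    (hp : p ∈ P) : 1 ≤ sigma2 P := by
  simpa [hP.2.1 p hp] using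
    norm_le_mul_sigma2 hspan one_pos fun q hq => hP.abs_inner_le_one hq hp

lemma norm_lt_mul_sigma2 (hP : IsRootSystem P) (hEA : CondEA P) (hne : P.Nonempty) {M : ℝ}
    {z : E N} (hz : ∀ p ∈ P, |⟪p, z⟫| < M) : ‖z‖ < M * sigma2 P := by
  obtain ⟨p₀, hp₀⟩ := hne
  obtain ⟨q, hq, hmax⟩ := Set.exists_max_image P (fun p => |⟪p, z⟫|) hP.1 ⟨p₀, hp₀⟩
  have hqM := hz q hq
  have hσ₂ := one_le_sigma2 hP hEA.span_eq_top hp₀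
  calc ‖z‖ ≤ (|⟪q, z⟫| + M) / 2 * sigma2 P :=
        norm_le_mul_sigma2 hEA.span_eq_top (by linarith [abs_nonneg ⟪q, z⟫])
          fun p hp => (hmax p hp).trans (by linarith)
    _ < M * sigma2 P := by gcongr; linarith

end Sigma2

theorem exists_basis_inner_ge_one_general (N : ℕ) (P : Set (E N))
    (hP : IsRootSystem P) (hEA : CondEA P) (x : E N)
    (hx : ‖x‖ ≥ (sigma1 P)⁻¹ * sigma2 P) :
    ∃ v : Fin N → E N, BasisIn P v ∧ ∀ i, ⟪v i, x⟫ ≥ 1 := by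
  suffices hspan : Submodule.span ℝ {p ∈ P | 1 ≤ |⟪p, x⟫|} = ⊤ by
    obtain ⟨v, hv⟩ := exists_basisIn_of_span_eq_top
      (eq_top_mono (hP.span_setOf_le_abs_inner_le 1 x) hspan)
    exact ⟨v, hv.mono fun _ hp => hp.1, fun i => (hv.1 i).2⟩
  rcases P.eq_empty_or_nonempty with rfl | hne
  · exact eq_top_mono (Submodule.span_mono (empty_subset _)) hEA.span_eq_top
  have hσ₁ := sigma1_pos hP hEA hne
  by_cases hlarge : ∃ p₁ ∈ P, (sigma1 P)⁻¹ ≤ |⟪p₁, x⟫|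
  · obtain ⟨p₁, hp₁, hp₁x⟩ := hlarge
    obtain ⟨w, hw, hwp₁⟩ := exists_basisIn_sigma1_le hP hEA hp₁
    rw [eq_top_iff, ← hw.2.2, Submodule.span_le]
    rintro _ ⟨i, rfl⟩
    refine hP.mem_span_of_one_le_abs_inner_mul hp₁ (hw.1 i) ?_
    calc 1 = sigma1 P * (sigma1 P)⁻¹ := (mul_inv_cancel₀ hσ₁.ne').symm
      _ ≤ |⟪w i, p₁⟫| * |⟪p₁, x⟫| := by gcongr; exact hwp₁ i
      _ = |⟪w i, p₁⟫ * ⟪p₁, x⟫| := (abs_mul _ _).symm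
  · simp only [not_exists, not_and, not_le] at hlarge
    exact absurd hx (not_le.mpr (norm_lt_mul_sigma2 hP hEA hne hlarge))

/-- for `|x| ≥ σ₁⁻¹σ₂` there is a basis `A ⊆ P` with `p·x ≥ 1` on `A`. -/
theorem exists_basis_inner_ge_one (N : ℕ) (hN : 1 ≤ N) (P : Set (E N))
    (hP : IsRootSystem P) (hEA : CondEA P) (x : E N)
    (hx : ‖x‖ ≥ (sigma1 P)⁻¹ * sigma2 P) :
    ∃ v : Fin N → E N, BasisIn P v ∧ ∀ i, ⟪v i, x⟫ ≥ 1 :=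
  exists_basis_inner_ge_one_general N P hP hEA x hx
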